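/- Let m ≥ 2 be even and N ≥ 1, and let γ = (1,2,…,m) ∈ S_m be the full cycle (the case r = 1). Let D₁,…,D_m be arbitrary complex N×N matrices and let τ be any pairing of {1,…,m}. Then | Σ_ψ Π_{l=1}^m (D_l)_{ψ(−l), ψ(γ(l))} | ≤ N^{m/2 + 1} · Π_{k=1}^m ‖D_k‖, where the sum runs over all functions ψ : ±[m] → {1,…,N} satisfying ψ(u) = ψ(−v) and ψ(v) = ψ(−u) for every block {u,v} of τ, and ‖·‖ denotes the operator norm. -/

import Mathlib

open MeasureTheory ProbabilityTheory Filter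
open scoped ENNReal NNReal Matrix

noncomputable section

namespace RMT

/-- The operator norm (ℓ² → ℓ²) of a complex square matrix. -/
noncomputable def opNorm {N : ℕ} (A : Matrix (Fin N) (Fin N) ℂ) : ℝ :=
  ‖(Matrix.toEuclideanCLM (𝕜 := ℂ) (n := Fin N)) A‖

/-- The entrywise absolute value of a complex matrix. -/
def absMatrix {N : ℕ} (A : Matrix (Fin N) (Fin N) ℂ) : Matrix (Fin N) (Fin N) ℂ :=
  fun u v => (‖A u v‖ : ℂ)

/-- The joint cumulant of the family `(Y i)_{i ∈ s}` with respect to `μ`: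
`K(Y) = ∑_{π partition of s} (-1)^{#π-1} (#π-1)! ∏_{B ∈ π} E[∏_{i ∈ B} Y i]`. -/
noncomputable def jointCumulantOn {Ω : Type*} [MeasurableSpace Ω] (μ : Measure Ω)
    {α : Type*} [DecidableEq α] (s : Finset α) (Y : α → Ω → ℂ) : ℂ :=
  ∑ π : Finpartition s,
    (-1 : ℂ) ^ (π.parts.card - 1) * (Nat.factorial (π.parts.card - 1) : ℂ) *
      ∏ B ∈ π.parts, ∫ ω, (∏ i ∈ B, Y i ω) ∂μ

/-- The joint cumulant `K_n(Y 0, …, Y (n-1))`. -/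
noncomputable def jointCumulant {Ω : Type*} [MeasurableSpace Ω] (μ : Measure Ω)
    (n : ℕ) (Y : Fin n → Ω → ℂ) : ℂ :=
  jointCumulantOn μ (Finset.univ : Finset (Fin n)) Y

/-- `z` or its complex conjugate, according to a Boolean sign. -/
def εapply (z : ℂ) (e : Bool) : ℂ := if e then z else (starRingEnd ℂ) z

/-- The standard complex Gaussian `a + i b` with `a, b` independent real `N(0,1/2)`. -/
noncomputable def stdCGaussian : Measure ℂ :=
  ((gaussianReal 0 (1/2)).prod (gaussianReal 0 (1/2))).map
    (fun p : ℝ × ℝ => (p.1 : ℂ) + (p.2 : ℂ) * Complex.I)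

/-- A configuration: a probability space carrying a family of `N × N` random matrices
`(X p)_{p ∈ I}` together with deterministic matrices `(D j)_{j ∈ J}`. -/
structure Config (I J : Type*) (N : ℕ) where
  Ω : Type
  mΩ : MeasurableSpace Ω
  μ : @Measure Ω mΩ
  prob : @IsProbabilityMeasure Ω mΩ μ
  X : I → Ω → Matrix (Fin N) (Fin N) ℂ
  D : J → Matrix (Fin N) (Fin N) ℂ

attribute [instance] Config.mΩ Config.prob

variable {I J : Type*} {N : ℕ}

/-- The unnormalized matrix entry `x_{ab} = √N · (X_p)_{ab}`. -/
noncomputable def Config.entry (cfg : Config I J N) (p : I) (a b : Fin N) (ω : cfg.Ω) : ℂ :=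
  (Real.sqrt N : ℂ) * cfg.X p ω a b

/-- `(X p)_{p ∈ I}` is a collection of independent GUE matrices. -/
def Config.IsGUE (cfg : Config I J N) : Prop :=
  (∀ p a b, Measurable fun ω => cfg.X p ω a b) ∧
  (∀ p ω, (cfg.X p ω)ᴴ = cfg.X p ω) ∧
  iIndepFun
    (fun q : I × {ab : Fin N × Fin N // ab.1 ≤ ab.2} =>
      cfg.entry q.1 q.2.1.1 q.2.1.2) cfg.μ ∧
  (∀ p (a b : Fin N), a < b → Measure.map (cfg.entry p a b) cfg.μ = stdCGaussian) ∧
  (∀ p (a : Fin N), Measure.map (cfg.entry p a a) cfg.μ =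
      (gaussianReal 0 1).map (fun x : ℝ => (x : ℂ)))

/-- `(X p)_{p ∈ I}` is a collection of independent GOE matrices. -/
def Config.IsGOE (cfg : Config I J N) : Prop :=
  (∀ p a b, Measurable fun ω => cfg.X p ω a b) ∧
  (∀ p ω a b, (cfg.X p ω a b).im = 0) ∧
  (∀ p ω, (cfg.X p ω)ᵀ = cfg.X p ω) ∧
  iIndepFun
    (fun q : I × {ab : Fin N × Fin N // ab.1 ≤ ab.2} =>
      fun ω => (cfg.entry q.1 q.2.1.1 q.2.1.2 ω).re) cfg.μ ∧
  (∀ p (a b : Fin N), a < b →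
      Measure.map (fun ω => (cfg.entry p a b ω).re) cfg.μ = gaussianReal 0 1) ∧
  (∀ p (a : Fin N), Measure.map (fun ω => (cfg.entry p a a ω).re) cfg.μ = gaussianReal 0 2)

/-- `(X p)_{p ∈ I}` is a collection of independent Wigner matrices with cumulant constant `C`. -/
def Config.IsWigner (cfg : Config I J N) (C : ℝ) : Prop :=
  (∀ p a b, Measurable fun ω => cfg.X p ω a b) ∧
  (∀ p ω, (cfg.X p ω)ᴴ = cfg.X p ω) ∧
  iIndepFun
    (fun q : I × {ab : Fin N × Fin N // ab.1 ≤ ab.2} =>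
      cfg.entry q.1 q.2.1.1 q.2.1.2) cfg.μ ∧
  (∀ p a b, ∫ ω, cfg.entry p a b ω ∂cfg.μ = 0) ∧
  (∀ p a b, a ≠ b → ∫ ω, ‖cfg.entry p a b ω‖ ^ 2 ∂cfg.μ = 1) ∧
  (∀ p (a b a' b' : Fin N), a < b → a' < b' →
      Measure.map (cfg.entry p a b) cfg.μ = Measure.map (cfg.entry p a' b') cfg.μ) ∧
  (∀ p (a b : Fin N), a < b → ∀ (n : ℕ) (ε : Fin (2 * n + 1) → Bool),
      jointCumulant cfg.μ (2 * n + 1) (fun k ω => εapply (cfg.entry p a b ω) (ε k)) = 0) ∧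
  (∀ p ω a, (cfg.X p ω a a).im = 0) ∧
  (∀ p (a a' : Fin N),
      Measure.map (cfg.entry p a a) cfg.μ = Measure.map (cfg.entry p a' a') cfg.μ) ∧
  (∀ p (a : Fin N) (n : ℕ),
      jointCumulant cfg.μ (2 * n + 1) (fun _ ω => cfg.entry p a a ω) = 0) ∧
  (∀ p (a b : Fin N) (s : ℕ), 0 < s → ∀ ε : Fin s → Bool,
      ‖jointCumulant cfg.μ s (fun k ω => εapply (cfg.entry p a b ω) (ε k))‖ ≤
        C * Nat.factorial s)

/-- The random matrix polynomial
`P(X, D) = ∑_{k<t} X_{i k 0} D_{j k 0} ⋯ X_{i k (m k - 1)} D_{j k (m k - 1)}`. -/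
noncomputable def Config.polyM (cfg : Config I J N) {t : ℕ} (m : Fin t → ℕ)
    (i : Fin t → ℕ → I) (j : Fin t → ℕ → J) (ω : cfg.Ω) : Matrix (Fin N) (Fin N) ℂ :=
  ∑ k : Fin t, ((List.range (m k)).map (fun u => cfg.X (i k u) ω * cfg.D (j k u))).prod

/-- `Tr P(X, D)` as a random variable. -/
noncomputable def Config.traceP (cfg : Config I J N) {t : ℕ} (m : Fin t → ℕ)
    (i : Fin t → ℕ → I) (j : Fin t → ℕ → J) (ω : cfg.Ω) : ℂ :=
  Matrix.trace (cfg.polyM m i j ω)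

/-- `E Tr P(X, D)`. -/
noncomputable def Config.meanT (cfg : Config I J N) {t : ℕ} (m : Fin t → ℕ)
    (i : Fin t → ℕ → I) (j : Fin t → ℕ → J) : ℂ :=
  ∫ ω, cfg.traceP m i j ω ∂cfg.μ

/-- `Var(Tr P(X, D)) = E |Tr P - E Tr P|²`. -/
noncomputable def Config.varT (cfg : Config I J N) {t : ℕ} (m : Fin t → ℕ)
    (i : Fin t → ℕ → I) (j : Fin t → ℕ → J) : ℝ :=
  ∫ ω, ‖cfg.traceP m i j ω - cfg.meanT m i j‖ ^ 2 ∂cfg.μ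

/-- The normalized trace `𝐗 = (Tr P - E Tr P)/√Var(Tr P)`. -/
noncomputable def Config.normT (cfg : Config I J N) {t : ℕ} (m : Fin t → ℕ)
    (i : Fin t → ℕ → I) (j : Fin t → ℕ → J) (ω : cfg.Ω) : ℂ :=
  (cfg.traceP m i j ω - cfg.meanT m i j) / (Real.sqrt (cfg.varT m i j) : ℂ)

/-- The `r`-th cumulant `K_r(𝐗)` of the normalized trace. -/
noncomputable def Config.cum (cfg : Config I J N) (r : ℕ) {t : ℕ} (m : Fin t → ℕ)
    (i : Fin t → ℕ → I) (j : Fin t → ℕ → J) : ℂ :=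
  jointCumulant cfg.μ r (fun _ => cfg.normT m i j)

/-- The monomial `X_{i a} D_{j a} ⋯ X_{i (a+len-1)} D_{j (a+len-1)}`. -/
noncomputable def Config.Ymon (cfg : Config I J N) (iF : ℕ → I) (jF : ℕ → J)
    (a len : ℕ) (ω : cfg.Ω) : Matrix (Fin N) (Fin N) ℂ :=
  ((List.range' a len).map (fun l => cfg.X (iF l) ω * cfg.D (jF l))).prod

/-- The monomial with optional transposes:
`X_{i a}^{ε a} D_{j a} ⋯ X_{i (a+len-1)}^{ε (a+len-1)} D_{j (a+len-1)}`
(`ε l = true` means no transpose). -/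
noncomputable def Config.YmonE (cfg : Config I J N) (iF : ℕ → I) (jF : ℕ → J)
    (ε : ℕ → Bool) (a len : ℕ) (ω : cfg.Ω) : Matrix (Fin N) (Fin N) ℂ :=
  ((List.range' a len).map
    (fun l => (if ε l then cfg.X (iF l) ω else (cfg.X (iF l) ω)ᵀ) * cfg.D (jF l))).prod

/-- Which of the `r` consecutive intervals of lengths `m 0, …, m (r-1)` the index `x` lies in
(0-indexed). -/
def blockIdx (m : ℕ → ℕ) (r : ℕ) (x : ℕ) : ℕ :=
  ((Finset.range r).filter (fun k => ∑ j ∈ Finset.range (k + 1), m j ≤ x)).card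

/-- The interval partition `γ` of `{0, …, (∑_{k<r} m k) - 1}` into `r` consecutive intervals,
as a setoid. -/
def gammaSetoid (m : ℕ → ℕ) (r mt : ℕ) : Setoid (Fin mt) :=
  Setoid.ker (fun u : Fin mt => blockIdx m r u)

/-- The permutation with cycle decomposition
`(0,…,m₀-1)(m₀,…,m₀+m₁-1)⋯`, as a function on `ℕ`. -/
def gammaFun (m : ℕ → ℕ) (r : ℕ) (x : ℕ) : ℕ :=
  if x + 1 = ∑ j ∈ Finset.range (blockIdx m r x + 1), m j
  then ∑ j ∈ Finset.range (blockIdx m r x), m j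
  else x + 1

/-- The setoid (partition) on `Fin mt` generated by a pairing given as an involution `t`. -/
def pairingSetoid {mt : ℕ} (t : Fin mt → Fin mt) : Setoid (Fin mt) :=
  Relation.EqvGen.setoid (fun a b => t a = b)

/-- `|P₂^i(m)|`: the number of pairings `τ` of `{0,…,mt-1}` (encoded as fixed-point-free
involutions) with `τ ∨ γ = 1` and `τ ≤ ker i`. -/
noncomputable def pairingsCount (mt r : ℕ) (m : ℕ → ℕ) {I : Type*} (iF : ℕ → I) : ℕ :=
  Nat.card {t : Fin mt → Fin mt //
    Function.Involutive t ∧ (∀ u, t u ≠ u) ∧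
    (pairingSetoid t ⊔ gammaSetoid m r mt = ⊤) ∧
    (∀ u : Fin mt, iF (t u) = iF u)}

/-- The setoid on `Fin n` associated with a finpartition of `Finset.univ`. -/
def finpartitionSetoid {α : Type*} [DecidableEq α] [Fintype α]
    (τ : Finpartition (Finset.univ : Finset α)) : Setoid α where
  r x y := ∀ B ∈ τ.parts, (x ∈ B ↔ y ∈ B)
  iseqv := ⟨fun _ _ _ => Iff.rfl, fun h B hB => (h B hB).symm,
    fun h h' B hB => (h B hB).trans (h' B hB)⟩

end RMT

/-!
Writing `ψ (-l) = φ l`, the constraint forces `ψ u = φ (t u)`, so the sum is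
`∑_φ ∏_l (D_l)_{φ l, φ (σ l)}` with `σ = t ∘ γ`: a product, over the cycles of `σ`, of traces of
products of the `D_l`. Each trace is at most `N` times an operator norm, which gives the bound
`N ^ #cycles(σ) ∏ ‖D_l‖`. Finally `t` is a product of at most `m / 2` transpositions, each of which
changes the number of cycles by at most one, so `#cycles(t γ) ≤ #cycles(γ) + m / 2 = m / 2 + 1`.
-/

section

open Finset Equiv

namespace Fintype

lemma prod_eq_mul_mul_prod_compl_pair {α M : Type*} [Fintype α] [DecidableEq α]
    [CommMonoid M] (f : α → M) {x y : α} (hxy : x ≠ y) :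
    ∏ l, f l = f x * f y * ∏ l ∈ {x, y}ᶜ, f l := by
  rw [← prod_pair hxy, prod_mul_prod_compl]

lemma sum_sum_update {α β M : Type*} [DecidableEq α] [Fintype α] [Fintype β]
    [DecidableEq β] [AddCommMonoid M] (g : (α → β) → M) (x : α) :
    ∑ φ : α → β, ∑ v, g (Function.update φ x v) = Fintype.card β • ∑ φ, g φ := by
  have hinv : Function.Involutive fun p : (α → β) × β => (Function.update p.1 x p.2, p.1 x) := by
    rintro ⟨φ, v⟩
    simp
  rw [← Fintype.sum_prod_type', ← Equiv.sum_comp (hinv.toPerm _), Fintype.sum_prod_type]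
  simp [Finset.smul_sum]

end Fintype

namespace Setoid

variable {α : Type*}

/-- The join of `r` with the relation identifying `a` and `b`. -/
def glue (r : Setoid α) (a b : α) : Setoid α where
  r x y := r x y ∨ (r x a ∧ r b y) ∨ (r x b ∧ r a y)
  iseqv := by
    refine ⟨fun x => Or.inl (r.refl x), ?_, ?_⟩
    · rintro x y (h | ⟨h₁, h₂⟩ | ⟨h₁, h₂⟩)
      exacts [Or.inl (r.symm h), Or.inr (Or.inr ⟨r.symm h₂, r.symm h₁⟩),
        Or.inr (Or.inl ⟨r.symm h₂, r.symm h₁⟩)]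
    · rintro x y z (h | ⟨h₁, h₂⟩ | ⟨h₁, h₂⟩) (g | ⟨g₁, g₂⟩ | ⟨g₁, g₂⟩)
      exacts [Or.inl (r.trans h g), Or.inr (Or.inl ⟨r.trans h g₁, g₂⟩),
        Or.inr (Or.inr ⟨r.trans h g₁, g₂⟩), Or.inr (Or.inl ⟨h₁, r.trans h₂ g⟩),
        Or.inr (Or.inl ⟨h₁, g₂⟩), Or.inl (r.trans h₁ g₂), Or.inr (Or.inr ⟨h₁, r.trans h₂ g⟩),
        Or.inl (r.trans h₁ g₂), Or.inr (Or.inr ⟨h₁, g₂⟩)]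

lemma card_quotient_le_of_le [Finite α] {r s : Setoid α} (h : r ≤ s) :
    Nat.card (Quotient s) ≤ Nat.card (Quotient r) :=
  Nat.card_le_card_of_surjective (Quotient.map id fun _ _ hxy => h hxy)
    (Quotient.ind fun x => ⟨Quotient.mk r x, rfl⟩)

/-- Only the class of `b` can be identified with another class. -/
lemma card_quotient_le_card_quotient_glue_add_one [Finite α] (r : Setoid α) (a b : α) :
    Nat.card (Quotient r) ≤ Nat.card (Quotient (r.glue a b)) + 1 := by
  classical
  let f : Quotient r → Quotient (r.glue a b) ⊕ Unit := fun c =>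
    if c = Quotient.mk r b then .inr () else .inl (Quotient.map id (fun _ _ => Or.inl) c)
  have hf : Function.Injective f := by
    intro c d hcd
    induction c using Quotient.ind with | _ x => ?_
    induction d using Quotient.ind with | _ y => ?_
    by_cases hx : Quotient.mk r x = Quotient.mk r b <;>
      by_cases hy : Quotient.mk r y = Quotient.mk r b <;> simp only [f, hx, hy] at hcd ⊢
    · simp at hcd
    · simp at hcd
    · rcases Quotient.exact (Sum.inl.inj hcd) with h | ⟨-, h⟩ | ⟨h, -⟩
      · exact Quotient.sound h
      · exact absurd (Quotient.sound (r.symm h)) hy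
      · exact absurd (Quotient.sound h) hx
  simpa [Nat.card_sum] using Nat.card_le_card_of_injective f hf

end Setoid

namespace Equiv.Perm

variable {α : Type*}

/-- The number of cycles of `σ`, fixed points included. -/
noncomputable def numCycles (σ : Perm α) : ℕ := Nat.card (Quotient (SameCycle.setoid σ))

lemma sameCycle_setoid_le {σ : Perm α} {r : Setoid α} (h : ∀ x, r x (σ x)) :
    SameCycle.setoid σ ≤ r := by
  rintro x _ ⟨i, rfl⟩
  induction i using Int.induction_on with
  | zero => exact r.refl x
  | succ n ih => rw [add_comm, zpow_add, zpow_one, mul_apply]; exact r.trans ih (h _)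
  | pred n ih =>
    rw [sub_eq_neg_add, zpow_add, zpow_neg_one, mul_apply]
    have hy := h (σ⁻¹ ((σ ^ (-(n : ℤ))) x))
    rw [Perm.inv_def, apply_symm_apply] at hy
    exact r.trans ih (r.symm hy)

lemma card_le_numCycles_one [Finite α] : Nat.card α ≤ numCycles (1 : Perm α) :=
  Nat.card_le_card_of_injective (Quotient.mk _) fun _ _ h => sameCycle_one.mp (Quotient.exact h)

lemma numCycles_le_one_of_isCycle [Finite α] {σ : Perm α} (hσ : σ.IsCycle)
    (hfix : ∀ x, σ x ≠ x) : numCycles σ ≤ 1 := by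
  refine Finite.card_le_one_iff_subsingleton.mpr ⟨fun c d => ?_⟩
  induction c using Quotient.ind with | _ x => ?_
  induction d using Quotient.ind with | _ y => ?_
  exact Quotient.sound (hσ.sameCycle (hfix x) (hfix y))

variable [DecidableEq α]

lemma sameCycle_setoid_swap_mul_le (σ : Perm α) (a b : α) :
    SameCycle.setoid (swap a b * σ) ≤ (SameCycle.setoid σ).glue a b := by
  refine sameCycle_setoid_le fun x => ?_
  have hx : σ.SameCycle x (σ x) := ⟨1, rfl⟩
  rw [mul_apply, swap_apply_def]
  split_ifs with ha hb
  · exact Or.inr (Or.inl ⟨ha ▸ hx, SameCycle.refl σ b⟩)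
  · exact Or.inr (Or.inr ⟨hb ▸ hx, SameCycle.refl σ a⟩)
  · exact Or.inl hx

lemma numCycles_le_numCycles_swap_mul_add_one [Finite α] (σ : Perm α) (a b : α) :
    numCycles σ ≤ numCycles (swap a b * σ) + 1 :=
  ((SameCycle.setoid σ).card_quotient_le_card_quotient_glue_add_one a b).trans
    (Nat.add_le_add_right (Setoid.card_quotient_le_of_le (sameCycle_setoid_swap_mul_le σ a b)) 1)

lemma numCycles_swap_mul_le [Finite α] (σ : Perm α) (a b : α) :
    numCycles (swap a b * σ) ≤ numCycles σ + 1 := by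
  simpa [← mul_assoc] using numCycles_le_numCycles_swap_mul_add_one (swap a b * σ) a b

/-- An involution is a product of `#τ.support / 2` disjoint transpositions, each of which changes
the number of cycles by at most one. -/
lemma numCycles_le_numCycles_mul_add_of_involutive [Fintype α] (σ : Perm α) {τ : Perm α}
    (hτ : Function.Involutive τ) : numCycles σ ≤ numCycles (τ * σ) + #τ.support / 2 := by
  induction hs : #τ.support using Nat.strong_induction_on generalizing τ with
  | _ k ih =>
  rcases eq_or_ne τ 1 with rfl | hne
  · simp
  obtain ⟨x, hx⟩ : ∃ x, τ x ≠ x := by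
    by_contra! h
    exact hne (Equiv.ext h)
  set τ' := swap x (τ x) * τ
  have hτ'x : τ' x = x := by simp [τ']
  have hτ'y : τ' (τ x) = τ x := by simp [τ', hτ x]
  have hτ'_inv : Function.Involutive τ' := by
    intro z
    by_cases hz : z = x ∨ z = τ x
    · rcases hz with rfl | rfl <;> simp [hτ'x, hτ'y]
    · push Not at hz
      have h₁ : τ z ≠ x := fun h => hz.2 (by rw [← h, hτ])
      have h₂ : τ z ≠ τ x := fun h => hz.1 (τ.injective h)
      have hτ'z : τ' z = τ z := by simp [τ', swap_apply_of_ne_of_ne h₁ h₂]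
      rw [hτ'z]
      simp [τ', hτ z, swap_apply_of_ne_of_ne hz.1 hz.2]
  have hdisj : Disjoint (swap x (τ x)) τ' := by
    intro z
    by_cases hz : z = x ∨ z = τ x
    · rcases hz with rfl | rfl <;> simp [hτ'x, hτ'y]
    · push Not at hz
      exact Or.inl (swap_apply_of_ne_of_ne hz.1 hz.2)
  have hτ_eq : τ = swap x (τ x) * τ' := by simp [τ', ← mul_assoc]
  have hcard : #τ.support = #τ'.support + 2 := by
    rw [hτ_eq, hdisj.card_support_mul, card_support_swap hx.symm, add_comm]
  have hcycles := numCycles_le_numCycles_swap_mul_add_one (τ' * σ) x (τ x)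
  rw [← mul_assoc, ← hτ_eq] at hcycles
  have := ih _ (by omega) hτ'_inv rfl
  omega

lemma numCycles_involutive_mul_finRotate_le {m : ℕ} (hm : 2 ≤ m) {t : Fin m → Fin m}
    (ht : Function.Involutive t) : numCycles (ht.toPerm t * finRotate m) ≤ m / 2 + 1 := by
  have hγ : numCycles (finRotate m) ≤ 1 :=
    numCycles_le_one_of_isCycle (isCycle_finRotate_of_le hm) fun x =>
      mem_support.mp (by simp [support_finRotate_of_le hm])
  have hsupp : #(ht.toPerm t).support ≤ m := (card_le_univ _).trans_eq (Fintype.card_fin m)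
  have := numCycles_le_numCycles_mul_add_of_involutive (ht.toPerm t * finRotate m)
    (τ := ht.toPerm t) ht
  rw [← mul_assoc, (by ext; simp [ht _] : ht.toPerm t * ht.toPerm t = 1), one_mul] at this
  omega

end Equiv.Perm

namespace Matrix

variable {α n R : Type*} [Fintype α] [DecidableEq α] [Fintype n] [CommSemiring R]

/-- `∑_φ ∏_l (D l)_{φ l, φ (σ l)}`; it is the product, over the cycles `(l₁ … l_k)` of `σ`, of
`tr (D l₁ ⋯ D l_k)`. -/
def cycleTrace (σ : Perm α) (D : α → Matrix n n R) : R :=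
  ∑ φ : α → n, ∏ l, D l (φ l) (φ (σ l))

lemma cycleTrace_one (D : α → Matrix n n R) :
    cycleTrace 1 D = ∏ l, (D l).trace :=
  (Fintype.prod_sum fun l i => D l i i).symm

/-- Splitting `x` off its cycle: `D (σ⁻¹ x)` and `D x` are merged and `x` becomes a fixed point
carrying the identity, whose trace `card n` is the only change. -/
lemma cycleTrace_swap_mul [DecidableEq n] (σ : Perm α) {x : α} (hx : σ x ≠ x)
    (D : α → Matrix n n R) :
    cycleTrace (Equiv.swap x (σ x) * σ)
        (Function.update (Function.update D (σ⁻¹ x) (D (σ⁻¹ x) * D x)) x 1) =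
      Fintype.card n * cycleTrace σ D := by
  set p := σ⁻¹ x
  have hp : σ p = x := by simp [p]
  have hpx : p ≠ x := fun h => hx (by rw [← h, hp, h])
  have hσ : ∀ l, l ≠ x → l ≠ p → σ l ≠ x ∧ σ l ≠ σ x := fun l hlx hlp =>
    ⟨fun h => hlp (σ.injective (h.trans hp.symm)), fun h => hlx (σ.injective h)⟩
  rw [cycleTrace, cycleTrace, ← nsmul_eq_mul, ← Fintype.sum_sum_update _ x]
  refine Fintype.sum_congr _ _ fun φ => ?_
  have hrest : ∀ v, ∏ l ∈ {x, p}ᶜ, D l (Function.update φ x v l)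
      (Function.update φ x v (σ l)) = ∏ l ∈ {x, p}ᶜ, D l (φ l) (φ (σ l)) := by
    intro v
    refine prod_congr rfl fun l hl => ?_
    simp only [mem_compl, mem_insert, mem_singleton, not_or] at hl
    rw [Function.update_of_ne hl.1, Function.update_of_ne (hσ l hl.1 hl.2).1]
  have hD'rest : ∏ l ∈ {x, p}ᶜ, Function.update (Function.update D p (D p * D x)) x 1 l (φ l)
      (φ ((Equiv.swap x (σ x) * σ) l)) = ∏ l ∈ {x, p}ᶜ, D l (φ l) (φ (σ l)) := by
    refine prod_congr rfl fun l hl => ?_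
    simp only [mem_compl, mem_insert, mem_singleton, not_or] at hl
    rw [Function.update_of_ne hl.1, Function.update_of_ne hl.2, Perm.mul_apply,
      swap_apply_of_ne_of_ne (hσ l hl.1 hl.2).1 (hσ l hl.1 hl.2).2]
  simp_rw [Fintype.prod_eq_mul_mul_prod_compl_pair _ hpx.symm, hrest, hD'rest, ← sum_mul]
  congr 1
  simp [hp, hpx, hx, Matrix.mul_apply, mul_comm]

lemma sum_filter_involution_eq_cycleTrace {t : α → α} (ht : Function.Involutive t)
    [DecidablePred fun ψ : α ⊕ α → n => ∀ u, ψ (Sum.inl u) = ψ (Sum.inr (t u))]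
    (γ : Perm α) (D : α → Matrix n n R) :
    ∑ ψ ∈ univ.filter (fun ψ : α ⊕ α → n => ∀ u, ψ (Sum.inl u) = ψ (Sum.inr (t u))),
        ∏ l, D l (ψ (Sum.inr l)) (ψ (Sum.inl (γ l))) = cycleTrace (ht.toPerm t * γ) D := by
  refine sum_nbij' (fun ψ => ψ ∘ Sum.inr) (fun φ => Sum.elim (φ ∘ t) φ) (by simp)
    (by simp) ?_ (fun _ _ => rfl) ?_
  · intro ψ hψ
    ext (u | u)
    exacts [((mem_filter.mp hψ).2 u).symm, rfl]
  · intro ψ hψ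
    simp [(mem_filter.mp hψ).2]

end Matrix

namespace RMT

open Matrix Equiv.Perm

variable {N : ℕ}

lemma opNorm_nonneg (A : Matrix (Fin N) (Fin N) ℂ) : 0 ≤ opNorm A := norm_nonneg _

lemma opNorm_mul_le (A B : Matrix (Fin N) (Fin N) ℂ) : opNorm (A * B) ≤ opNorm A * opNorm B := by
  rw [opNorm, map_mul]
  exact norm_mul_le _ _

lemma opNorm_one_le : opNorm (1 : Matrix (Fin N) (Fin N) ℂ) ≤ 1 := by
  rw [opNorm, map_one]
  exact ContinuousLinearMap.norm_id_le

lemma norm_apply_le_opNorm (A : Matrix (Fin N) (Fin N) ℂ) (a b : Fin N) : ‖A a b‖ ≤ opNorm A := by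
  set T := Matrix.toEuclideanCLM (𝕜 := ℂ) (n := Fin N) A
  have hT : T (EuclideanSpace.single b 1) a = A a b := by
    simp [T, EuclideanSpace.single, Matrix.mulVec_single]
  calc ‖A a b‖ = ‖T (EuclideanSpace.single b 1) a‖ := by rw [hT]
    _ ≤ ‖T (EuclideanSpace.single b 1)‖ := PiLp.norm_apply_le _ _
    _ ≤ ‖T‖ * ‖EuclideanSpace.single b (1 : ℂ)‖ := T.le_opNorm _
    _ = opNorm A := by simp [T, opNorm]

lemma norm_trace_le (A : Matrix (Fin N) (Fin N) ℂ) : ‖A.trace‖ ≤ N * opNorm A :=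
  calc ‖A.trace‖ ≤ ∑ i, ‖A i i‖ := norm_sum_le _ _
    _ ≤ ∑ _i : Fin N, opNorm A := sum_le_sum fun i _ => norm_apply_le_opNorm A i i
    _ = N * opNorm A := by simp

lemma prod_opNorm_update_le {α : Type*} [Fintype α] [DecidableEq α]
    (D : α → Matrix (Fin N) (Fin N) ℂ) {p x : α} (hpx : p ≠ x) :
    ∏ l, opNorm (Function.update (Function.update D p (D p * D x)) x 1 l) ≤
      ∏ l, opNorm (D l) := by
  have hrest : ∀ l ∈ ({x, p} : Finset α)ᶜ,
      opNorm (Function.update (Function.update D p (D p * D x)) x 1 l) = opNorm (D l) := by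
    intro l hl
    simp only [mem_compl, mem_insert, mem_singleton, not_or] at hl
    rw [Function.update_of_ne hl.1, Function.update_of_ne hl.2]
  rw [Fintype.prod_eq_mul_mul_prod_compl_pair _ hpx.symm,
    Fintype.prod_eq_mul_mul_prod_compl_pair _ hpx.symm, prod_congr rfl hrest,
    Function.update_self, Function.update_of_ne hpx, Function.update_self]
  calc opNorm 1 * opNorm (D p * D x) * ∏ l ∈ {x, p}ᶜ, opNorm (D l)
      ≤ 1 * (opNorm (D p) * opNorm (D x)) * ∏ l ∈ {x, p}ᶜ, opNorm (D l) := by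
        gcongr
        exacts [prod_nonneg fun l _ => opNorm_nonneg _, opNorm_nonneg _, opNorm_one_le,
          opNorm_mul_le _ _]
    _ = opNorm (D x) * opNorm (D p) * ∏ l ∈ {x, p}ᶜ, opNorm (D l) := by ring

theorem norm_cycleTrace_le (hN : 0 < N) {α : Type*} [Fintype α] [DecidableEq α] (σ : Perm α)
    (D : α → Matrix (Fin N) (Fin N) ℂ) :
    ‖cycleTrace σ D‖ ≤ N ^ numCycles σ * ∏ l, opNorm (D l) := by
  induction hs : #σ.support using Nat.strong_induction_on generalizing σ D with
  | _ k ih =>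
  have hN₁ : (1 : ℝ) ≤ N := by exact_mod_cast hN
  rcases eq_or_ne σ 1 with rfl | hσ
  · calc ‖cycleTrace 1 D‖ = ∏ l, ‖(D l).trace‖ := by rw [cycleTrace_one, norm_prod]
      _ ≤ ∏ l, (N * opNorm (D l)) :=
          prod_le_prod (fun _ _ => norm_nonneg _) fun l _ => norm_trace_le _
      _ = N ^ Nat.card α * ∏ l, opNorm (D l) := by
          rw [prod_mul_distrib, prod_const, card_univ, Nat.card_eq_fintype_card]
      _ ≤ N ^ numCycles 1 * ∏ l, opNorm (D l) := by
          gcongr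
          exacts [prod_nonneg fun l _ => opNorm_nonneg _, card_le_numCycles_one]
  obtain ⟨x, hx⟩ : ∃ x, σ x ≠ x := not_forall.mp fun h => hσ (Equiv.ext h)
  have hpx : σ⁻¹ x ≠ x := fun h => hx (by simpa using congrArg σ h.symm)
  refine le_of_mul_le_mul_left ?_ (by positivity : (0 : ℝ) < N)
  calc (N : ℝ) * ‖cycleTrace σ D‖
      = ‖cycleTrace (swap x (σ x) * σ)
          (Function.update (Function.update D (σ⁻¹ x) (D (σ⁻¹ x) * D x)) x 1)‖ := by
        rw [cycleTrace_swap_mul σ hx, norm_mul, Fintype.card_fin, Complex.norm_natCast]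
    _ ≤ N ^ numCycles (swap x (σ x) * σ) * ∏ l, opNorm (D l) :=
        (ih _ (hs ▸ card_support_swap_mul hx) _ _ rfl).trans
          (mul_le_mul_of_nonneg_left (prod_opNorm_update_le D hpx) (by positivity))
    _ ≤ N ^ (numCycles σ + 1) * ∏ l, opNorm (D l) := by
        gcongr
        exacts [prod_nonneg fun l _ => opNorm_nonneg _, numCycles_swap_mul_le σ x (σ x)]
    _ = N * (N ^ numCycles σ * ∏ l, opNorm (D l)) := by ring

end RMT

end

open RMT in
/-- Positive elements of `±[m]` are `Sum.inl`, negative ones `Sum.inr`; `τ` is the involution `t`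
and `γ = finRotate m`. -/
theorem det_sum_bound_one_cycle_general (m : ℕ) (hm : 2 ≤ m)
    (N : ℕ) (hN : 1 ≤ N) (D : Fin m → Matrix (Fin N) (Fin N) ℂ)
    (t : Fin m → Fin m) (ht : Function.Involutive t) :
    ‖∑ ψ ∈ Finset.univ.filter
        (fun ψ : (Fin m ⊕ Fin m) → Fin N => ∀ u, ψ (Sum.inl u) = ψ (Sum.inr (t u))),
        ∏ l : Fin m, D l (ψ (Sum.inr l)) (ψ (Sum.inl (finRotate m l)))‖ ≤
      (N : ℝ) ^ (m / 2 + 1) * ∏ k : Fin m, opNorm (D k) := by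
  refine (congrArg norm (Matrix.sum_filter_involution_eq_cycleTrace ht _ D)).trans_le ?_
  calc _ ≤ (N : ℝ) ^ (ht.toPerm t * finRotate m).numCycles * ∏ k, opNorm (D k) :=
        norm_cycleTrace_le hN _ D
    _ ≤ _ := by
      gcongr
      · exact Finset.prod_nonneg fun k _ => opNorm_nonneg (D k)
      · exact_mod_cast hN
      · exact Equiv.Perm.numCycles_involutive_mul_finRotate_le hm ht

open RMT in
/-- The one-cycle (`r = 1`) bound on sums of products of deterministic
matrix entries constrained by a pairing: `|∑_ψ ∏_l (D_l)_{ψ(-l), ψ(γ l)}| ≤ N^{m/2+1} ∏ ‖D_k‖`,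
where the pairing `τ` is encoded as the fixed-point-free involution `t` and the constraint
`ker ψ ≥ π_τ` reads `ψ(u) = ψ(-(t u))` for all `u`. Positive elements of `±[m]` are encoded
as `Sum.inl`, negative ones as `Sum.inr`, and `γ` is the full cycle `finRotate m`. -/
theorem det_sum_bound_one_cycle (m : ℕ) (hm : 2 ≤ m) (hme : Even m)
    (N : ℕ) (hN : 1 ≤ N) (D : Fin m → Matrix (Fin N) (Fin N) ℂ)
    (t : Fin m → Fin m) (ht : Function.Involutive t) (ht' : ∀ u, t u ≠ u) :
    ‖∑ ψ ∈ Finset.univ.filter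
        (fun ψ : (Fin m ⊕ Fin m) → Fin N => ∀ u, ψ (Sum.inl u) = ψ (Sum.inr (t u))),
        ∏ l : Fin m, D l (ψ (Sum.inr l)) (ψ (Sum.inl (finRotate m l)))‖ ≤
      (N : ℝ) ^ (m / 2 + 1) * ∏ k : Fin m, opNorm (D k) :=
  det_sum_bound_one_cycle_general m hm N hN D t ht
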